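/- arXiv:2410.22964 — 4 statements merged into one kernel-verified Lean document; each statement's English description precedes it below -/
import Mathlib

section
/- For any positive integers ℓ and i with ℓ ≤ i ≤ |t|, the upper triangle utility satisfies VUTU_t(ℓ, i) = C(i-1, ℓ-1) · VUTU_t(1, i), where C denotes the binomial coefficient. -/
/-- Upper Triangle Utility of a transaction whose j-th item (1-indexed) has weight `w j`. -/
noncomputable def vutu (w : ℕ → ℝ) : ℕ → ℕ → ℝ
  | 0, _ => 0
  | 1, i => ∑ j ∈ Finset.Icc 1 i, w j
  | _ + 2, 0 => 0
  | ℓ + 2, i + 1 =>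
    if i + 1 < ℓ + 2 then 0
    else (Nat.choose i (ℓ + 1) : ℝ) * w (i + 1) + vutu w (ℓ + 1) i + vutu w (ℓ + 2) i
  termination_by ℓ i => i

lemma vutu_one (w : ℕ → ℝ) (i : ℕ) : vutu w 1 i = ∑ j ∈ Finset.Icc 1 i, w j := by
  rw [vutu]

lemma vutu_succ (w : ℕ → ℝ) (m i : ℕ) (h : ¬ (i + 1 < m + 2)) :
    vutu w (m + 2) (i + 1) =
      (Nat.choose i (m + 1) : ℝ) * w (i + 1) + vutu w (m + 1) i + vutu w (m + 2) i := by
  rw [vutu, if_neg h]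

lemma vutu_of_lt (w : ℕ → ℝ) : ∀ ℓ i, i < ℓ → vutu w ℓ i = 0
  | 0, _, _ => by rw [vutu]
  | 1, i, h => by
    interval_cases i
    simp [vutu_one]
  | ℓ + 2, 0, _ => by rw [vutu]
  | ℓ + 2, i + 1, h => by
    rw [vutu, if_pos h]

lemma vutu_key (w : ℕ → ℝ) : ∀ i ℓ, 1 ≤ ℓ → ℓ ≤ i →
    vutu w ℓ i = (Nat.choose (i - 1) (ℓ - 1) : ℝ) * vutu w 1 i := by
  intro i
  induction i with
  | zero => intro ℓ h1 h2; omega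
  | succ k ih =>
    intro ℓ h1 h2
    match ℓ, h1 with
    | 1, _ => simp
    | m + 2, _ =>
      have hk : m + 1 ≤ k := by omega
      have h1' : vutu w (m + 1) k = (Nat.choose (k - 1) m : ℝ) * vutu w 1 k := by
        have := ih (m + 1) (by omega) hk
        simpa using this
      have h2' : vutu w (m + 2) k = (Nat.choose (k - 1) (m + 1) : ℝ) * vutu w 1 k := by
        rcases lt_or_ge k (m + 2) with h | h
        · have hk' : k = m + 1 := by omega
          rw [vutu_of_lt w _ _ (by omega), hk']
          simp [Nat.choose_eq_zero_of_lt (by omega : m < m + 1)]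
        · have := ih (m + 2) (by omega) h
          simpa using this
      have hsum : vutu w 1 (k + 1) = vutu w 1 k + w (k + 1) := by
        rw [vutu_one, vutu_one, Finset.sum_Icc_succ_top (by omega)]
      obtain ⟨j, rfl⟩ : ∃ j, k = j + 1 := ⟨k - 1, by omega⟩
      have pascal : Nat.choose (j + 1) (m + 1) = Nat.choose j m + Nat.choose j (m + 1) :=
        Nat.choose_succ_succ j m
      rw [vutu_succ w m (j + 1) (by omega), h1', h2', hsum]
      simp only [Nat.add_sub_cancel]
      push_cast [pascal]
      ring

theorem vutu_closed_form (w : ℕ → ℝ) (hw : ∀ j, 0 ≤ w j) (n ℓ i : ℕ)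
    (hℓ : 1 ≤ ℓ) (hℓi : ℓ ≤ i) (hin : i ≤ n) :
    vutu w ℓ i = (Nat.choose (i - 1) (ℓ - 1) : ℝ) * vutu w 1 i := by
  exact vutu_key w i ℓ hℓ hℓi
end

section
/- For any positive integers ℓ and i with ℓ ≤ i ≤ |t|, the upper triangle utility is symmetric: VUTU_t(ℓ, i) = VUTU_t(i - ℓ + 1, i). -/
lemma vutu_closed (w : ℕ → ℝ) :
    ∀ i ℓ : ℕ, 1 ≤ ℓ →
      vutu w ℓ i = (Nat.choose (i - 1) (ℓ - 1) : ℝ) * ∑ j ∈ Finset.Icc 1 i, w j := by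
  intro i
  induction i with
  | zero =>
    intro ℓ hℓ
    simp only [Finset.Icc_self, show Finset.Icc 1 0 = ∅ by simp, Finset.sum_empty, mul_zero]
    match ℓ, hℓ with
    | 1, _ => simp [vutu]
    | (l + 2), _ => simp [vutu]
  | succ i ih =>
    intro ℓ hℓ
    match ℓ, hℓ with
    | 1, _ => simp [vutu]
    | (l + 2), _ =>
      rw [vutu]
      by_cases h : i + 1 < l + 2
      · rw [if_pos h]
        have : (i + 1 - 1).choose (l + 2 - 1) = 0 := Nat.choose_eq_zero_of_lt (by omega)
        rw [this]
        simp
      · rw [if_neg h]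
        have hi : 1 ≤ i := by omega
        rw [ih (l + 1) (by omega), ih (l + 2) (by omega)]
        have hsum : ∑ j ∈ Finset.Icc 1 (i + 1), w j
            = (∑ j ∈ Finset.Icc 1 i, w j) + w (i + 1) := by
          rw [← Finset.sum_Icc_succ_top (by omega : 1 ≤ i + 1)]
        have hpascal : (i.choose (l + 1) : ℝ)
            = ((i - 1).choose l : ℝ) + ((i - 1).choose (l + 1) : ℝ) := by
          have h2 : i.choose (l + 1) = (i - 1).choose l + (i - 1).choose (l + 1) := by
            conv_lhs => rw [show i = (i - 1) + 1 by omega]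
            exact Nat.choose_succ_succ (i - 1) l
          push_cast [h2]
          ring
        simp only [Nat.add_sub_cancel, show l + 2 - 1 = l + 1 from rfl] at *
        rw [hsum, hpascal]
        ring

theorem vutu_symm (w : ℕ → ℝ) (hw : ∀ j, 0 ≤ w j) (n ℓ i : ℕ)
    (hℓ : 1 ≤ ℓ) (hℓi : ℓ ≤ i) (hin : i ≤ n) :
    vutu w ℓ i = vutu w (i - ℓ + 1) i := by
  rw [vutu_closed w i ℓ hℓ, vutu_closed w i (i - ℓ + 1) (by omega)]
  congr 2
  have h1 : i - ℓ + 1 - 1 = (i - 1) - (ℓ - 1) := by omega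
  rw [h1, Nat.choose_symm (by omega)]
end

section
/- For a finite weighted set t of n items and length interval [m..M] with 1 ≤ m ≤ M ≤ n, the sum over subsets X with m ≤ |X| ≤ M of the average utility u_T(X)/|X| equals (Σ_{ℓ=m}^{M} C(n-1, ℓ-1)/ℓ) · W, where W is the total weight of t. -/
open Finset

lemma count_aux {α : Type*} [DecidableEq α] (t : Finset α) {x : α} (hx : x ∈ t) (ℓ : ℕ)
    (hℓ : 1 ≤ ℓ) :
    ((t.powersetCard ℓ).filter (fun X => x ∈ X)).card = (t.card - 1).choose (ℓ - 1) := by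
  rw [← Finset.card_erase_of_mem hx, ← Finset.card_powersetCard]
  apply Finset.card_bij (fun X _ => X.erase x)
  · intro X hX
    simp only [mem_filter, mem_powersetCard] at hX
    simp only [mem_powersetCard]
    exact ⟨Finset.erase_subset_erase _ hX.1.1, by rw [Finset.card_erase_of_mem hX.2, hX.1.2]⟩
  · intro X hX Y hY h
    simp only [mem_filter] at hX hY
    rw [← Finset.insert_erase hX.2, ← Finset.insert_erase hY.2, h]
  · intro Y hY
    simp only [mem_powersetCard] at hY
    have hxY : x ∉ Y := fun h => (Finset.mem_erase.1 (hY.1 h)).1 rfl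
    refine ⟨insert x Y, ?_, by rw [Finset.erase_insert hxY]⟩
    simp only [mem_filter, mem_powersetCard]
    refine ⟨⟨Finset.insert_subset hx (hY.1.trans (Finset.erase_subset _ _)), ?_⟩,
      Finset.mem_insert_self _ _⟩
    rw [Finset.card_insert_of_notMem hxY, hY.2, Nat.sub_add_cancel hℓ]

lemma layer_sum {α : Type*} [DecidableEq α] (t : Finset α) (w : α → ℝ) (ℓ : ℕ) (hℓ : 1 ≤ ℓ) :
    ∑ X ∈ t.powersetCard ℓ, ∑ x ∈ X, w x =
      ((t.card - 1).choose (ℓ - 1) : ℝ) * ∑ x ∈ t, w x := by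
  have : ∀ X ∈ t.powersetCard ℓ, ∑ x ∈ X, w x = ∑ x ∈ t, if x ∈ X then w x else 0 := by
    intro X hX
    rw [Finset.sum_ite_mem, Finset.inter_comm,
      Finset.inter_eq_left.2 (Finset.mem_powersetCard.1 hX).1]
  rw [Finset.sum_congr rfl this, Finset.sum_comm, Finset.mul_sum]
  refine Finset.sum_congr rfl fun x hx => ?_
  rw [Finset.sum_ite, Finset.sum_const, Finset.sum_const_zero, add_zero, ← count_aux t hx ℓ hℓ]
  simp [mul_comm]

theorem average_utility_length_interval {α : Type*} [DecidableEq α] (t : Finset α) (w : α → ℝ)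
    (hw : ∀ x ∈ t, 0 ≤ w x) (n m M : ℕ) (hn : t.card = n)
    (hm : 1 ≤ m) (hmM : m ≤ M) (hM : M ≤ n) :
    ∑ X ∈ t.powerset.filter (fun X => m ≤ X.card ∧ X.card ≤ M),
        (∑ x ∈ X, w x) / (X.card : ℝ) =
      (∑ ℓ ∈ Finset.Icc m M, (Nat.choose (n - 1) (ℓ - 1) : ℝ) / ℓ) * ∑ x ∈ t, w x := by
  have hpart : t.powerset.filter (fun X => m ≤ X.card ∧ X.card ≤ M) =
      (Finset.Icc m M).biUnion (fun ℓ => t.powersetCard ℓ) := by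
    ext X
    simp only [mem_filter, mem_powerset, mem_biUnion, Finset.mem_Icc, mem_powersetCard]
    aesop
  rw [hpart, Finset.sum_biUnion, Finset.sum_mul]
  · refine Finset.sum_congr rfl fun ℓ hℓ => ?_
    have hℓ1 : 1 ≤ ℓ := hm.trans (Finset.mem_Icc.1 hℓ).1
    have : ∀ X ∈ t.powersetCard ℓ, (∑ x ∈ X, w x) / (X.card : ℝ) = (∑ x ∈ X, w x) / ℓ := by
      intro X hX; rw [(Finset.mem_powersetCard.1 hX).2]
    rw [Finset.sum_congr rfl this, ← Finset.sum_div, layer_sum t w ℓ hℓ1, hn]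
    ring
  · intro a ha b hb hab
    simp only [Function.onFun, Finset.disjoint_left, mem_powersetCard]
    rintro X ⟨-, rfl⟩ ⟨-, h⟩
    exact hab h
end

section
/- Let t be a finite sequence of n weighted items with prefix sums S(i), and let VUTU_t(ℓ, i) = C(i-1, ℓ-1)·S(i) for ℓ ≤ i (0 otherwise). Then the sum of utilities of all size-ℓ subsets of the first i items that contain item t[i] equals VUTU_t(ℓ, i) − VUTU_t(ℓ, i−1), and this equals C(i-1, ℓ-1)·w(t[i]) + VUTU_t(ℓ−1, i−1). -/
/-- Closed form of the Upper Triangle Utility: `C(i-1, ℓ-1) * S i` when `1 ≤ ℓ ≤ i`,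
and `0` otherwise (implementing the convention `C(n, k) = 0` for `k < 0`). -/
noncomputable def vutuCF (S : ℕ → ℝ) (ℓ i : ℕ) : ℝ :=
  if 1 ≤ ℓ ∧ ℓ ≤ i then (Nat.choose (i - 1) (ℓ - 1) : ℝ) * S i else 0

open Finset

lemma aux_sum_filter_mem (w : ℕ → ℝ) (s : Finset ℕ) (a : ℕ) (ha : a ∈ s) (k : ℕ) :
    ∑ X ∈ (s.powersetCard (k+1)).filter (fun X => a ∈ X), ∑ j ∈ X, w j
      = ∑ Y ∈ (s.erase a).powersetCard k, (w a + ∑ j ∈ Y, w j) := by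
  apply Finset.sum_bij (fun X _ => X.erase a)
  · intro Y hY
    simp only [mem_filter, mem_powersetCard] at hY
    simp only [mem_powersetCard]
    constructor
    · intro x hx
      simp only [mem_erase] at hx ⊢
      exact ⟨hx.1, hY.1.1 hx.2⟩
    · rw [Finset.card_erase_of_mem hY.2, hY.1.2]; rfl
  · intro Y1 h1 Y2 h2 h
    simp only [mem_filter] at h1 h2
    rw [← Finset.insert_erase h1.2, ← Finset.insert_erase h2.2, h]
  · intro Y hY
    simp only [mem_powersetCard] at hY
    have haY : a ∉ Y := fun h => (mem_erase.mp (hY.1 h)).1 rfl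
    refine ⟨insert a Y, ?_, ?_⟩
    · simp only [mem_filter, mem_powersetCard]
      refine ⟨⟨?_, ?_⟩, mem_insert_self a Y⟩
      · intro x hx
        rcases mem_insert.mp hx with rfl | hx
        · exact ha
        · exact (erase_subset a s) (hY.1 hx)
      · rw [card_insert_of_notMem haY, hY.2]
    · rw [Finset.erase_insert haY]
  · intro X hX
    simp only [mem_filter] at hX
    rw [Finset.add_sum_erase _ w hX.2]

lemma aux_sum_powersetCard (w : ℕ → ℝ) (s : Finset ℕ) (k : ℕ) :
    ∑ Y ∈ s.powersetCard (k+1), ∑ j ∈ Y, w j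
      = ((s.card - 1).choose k : ℝ) * ∑ j ∈ s, w j := by
  have h1 : ∀ Y ∈ s.powersetCard (k+1), ∑ j ∈ Y, w j
      = ∑ j ∈ s, if j ∈ Y then w j else 0 := by
    intro Y hY
    rw [Finset.sum_ite_mem, Finset.inter_eq_right.mpr (mem_powersetCard.mp hY).1]
  rw [Finset.sum_congr rfl h1, Finset.sum_comm, Finset.mul_sum]
  refine Finset.sum_congr rfl fun j hj => ?_
  rw [← Finset.sum_filter]
  have hcard : ((s.powersetCard (k+1)).filter (fun Y => j ∈ Y)).card
      = (s.card - 1).choose k := by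
    rw [show ((s.powersetCard (k+1)).filter (fun Y => j ∈ Y)).card
        = ((s.erase j).powersetCard k).card from ?_, Finset.card_powersetCard,
        Finset.card_erase_of_mem hj]
    apply Finset.card_bij (fun Y _ => Y.erase j)
    · intro Y hY
      simp only [mem_filter, mem_powersetCard] at hY
      simp only [mem_powersetCard]
      constructor
      · intro x hx
        simp only [mem_erase] at hx ⊢
        exact ⟨hx.1, hY.1.1 hx.2⟩
      · rw [Finset.card_erase_of_mem hY.2, hY.1.2]; rfl
    · intro Y1 h1 Y2 h2 h
      simp only [mem_filter] at h1 h2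
      rw [← Finset.insert_erase h1.2, ← Finset.insert_erase h2.2, h]
    · intro Y hY
      simp only [mem_powersetCard] at hY
      have hjY : j ∉ Y := fun h => (mem_erase.mp (hY.1 h)).1 rfl
      refine ⟨insert j Y, ?_, ?_⟩
      · simp only [mem_filter, mem_powersetCard]
        refine ⟨⟨?_, ?_⟩, mem_insert_self j Y⟩
        · intro x hx
          rcases mem_insert.mp hx with rfl | hx
          · exact hj
          · exact (erase_subset j s) (hY.1 hx)
        · rw [card_insert_of_notMem hjY, hY.2]
      · rw [Finset.erase_insert hjY]
  rw [Finset.sum_const, hcard, nsmul_eq_mul]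

theorem vutu_difference_last_item (w : ℕ → ℝ) (hw : ∀ j, 0 ≤ w j)
    (S : ℕ → ℝ) (hS : ∀ j, S j = ∑ m ∈ Finset.Icc 1 j, w m)
    (n ℓ i : ℕ) (hℓ : 1 ≤ ℓ) (hℓi : ℓ ≤ i) (hin : i ≤ n) :
    (∑ X ∈ (Finset.Icc 1 i).powerset.filter (fun X => X.card = ℓ ∧ i ∈ X),
        ∑ j ∈ X, w j) = vutuCF S ℓ i - vutuCF S ℓ (i - 1) ∧
      vutuCF S ℓ i - vutuCF S ℓ (i - 1) =
        (Nat.choose (i - 1) (ℓ - 1) : ℝ) * w i + vutuCF S (ℓ - 1) (i - 1) := by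
  have hi1 : 1 ≤ i := le_trans hℓ hℓi
  have hIcc : i ∈ Finset.Icc 1 i := by simp [hi1]
  have herase : (Finset.Icc 1 i).erase i = Finset.Icc 1 (i-1) := by
    rw [Finset.Icc_erase_right]
    ext x; simp; omega
  have hScons : S i = S (i-1) + w i := by
    rw [hS, hS, show i = (i-1)+1 from (Nat.succ_pred_eq_of_pos hi1).symm,
      Finset.sum_Icc_succ_top (by omega)]
    simp
  -- rewrite the filtered powerset as powersetCard + filter
  have hset : (Finset.Icc 1 i).powerset.filter (fun X => X.card = ℓ ∧ i ∈ X)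
      = ((Finset.Icc 1 i).powersetCard ℓ).filter (fun X => i ∈ X) := by
    ext X
    simp [Finset.mem_powersetCard, Finset.mem_powerset, and_assoc]
  have hℓeq : ℓ = (ℓ - 1) + 1 := (Nat.succ_pred_eq_of_pos hℓ).symm
  have key : (∑ X ∈ (Finset.Icc 1 i).powerset.filter (fun X => X.card = ℓ ∧ i ∈ X),
        ∑ j ∈ X, w j)
      = ((i-1).choose (ℓ-1) : ℝ) * w i + vutuCF S (ℓ - 1) (i - 1) := by
    rw [hset, hℓeq, aux_sum_filter_mem w _ i hIcc, herase, Finset.sum_add_distrib,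
      Finset.sum_const, Finset.card_powersetCard, Nat.card_Icc]
    simp only [nsmul_eq_mul, Nat.add_sub_cancel]
    congr 1
    rcases Nat.lt_or_ge ℓ 2 with h2 | h2
    · -- ℓ = 1
      have : ℓ = 1 := by omega
      subst this
      simp [vutuCF]
    · rw [show ℓ - 1 = (ℓ - 2) + 1 from by omega, aux_sum_powersetCard, Nat.card_Icc,
        vutuCF, if_pos ⟨by omega, by omega⟩, hS]
      congr 2 <;> omega
  have keyB : vutuCF S ℓ i - vutuCF S ℓ (i - 1)
      = ((i-1).choose (ℓ-1) : ℝ) * w i + vutuCF S (ℓ - 1) (i - 1) := by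
    rcases Nat.lt_or_ge i 2 with hi2 | hi2
    · have hi : i = 1 := by omega
      have hl : ℓ = 1 := by omega
      subst hi; subst hl
      simp [vutuCF, hS]
    · rcases eq_or_lt_of_le hℓi with heq | hlt
      · subst heq
        rcases Nat.lt_or_ge ℓ 2 with h2 | h2
        · omega
        · rw [vutuCF, vutuCF, vutuCF, if_pos ⟨hℓ, le_refl _⟩, if_neg (by omega),
            if_pos ⟨by omega, by omega⟩, Nat.choose_self,
            show ℓ - 1 - 1 = ℓ - 2 from by omega, Nat.choose_self, hScons]
          push_cast; ring
      · rw [vutuCF, vutuCF, if_pos ⟨hℓ, hℓi⟩, if_pos ⟨hℓ, by omega⟩, hScons]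
        rcases Nat.lt_or_ge ℓ 2 with h2 | h2
        · have hl : ℓ = 1 := by omega
          subst hl
          simp [vutuCF]
        · rw [vutuCF, if_pos ⟨by omega, by omega⟩]
          have pascal : ((i-1).choose (ℓ-1) : ℝ)
              = (i-2).choose (ℓ-2) + (i-2).choose (ℓ-1) := by
            rw [show i - 1 = (i-2)+1 from by omega, show ℓ - 1 = (ℓ-2)+1 from by omega,
              Nat.choose_succ_succ]
            push_cast
            congr 2
          rw [show i - 1 - 1 = i - 2 from by omega, show ℓ - 1 - 1 = ℓ - 2 from by omega,
            pascal]
          ring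
  exact ⟨key.trans keyB.symm, keyB⟩
end
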